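/- The map ρ,J,κ ↦ f₁(ρ,J,κ) is the right inverse of the moment map on the subspace w⋆N: the composition (moment map) ∘ f₁ is the identity on ℝ³, and f₁ ∘ (moment map) restricted to w⋆N is the identity on w⋆N, where N = span{1_v, v, v²}. -/
import Mathlib


/-- `f₁` is a right inverse of the moment map, and a two-sided inverse on `w ⋆ N`:
(i) `M(f₁(ρ,J,κ)) = (ρ,J,κ)` for all `(ρ,J,κ) ∈ ℝ³`; (ii) for every `g` in
`N = span{1_v, v, v²}`, `f₁(M(w ⋆ g)) = w ⋆ g`. -/
theorem stmt_17 (Nv : ℕ) (v w : Fin Nv → ℝ)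
    (hpos : ∀ j, 0 < w j)
    -- symmetric grid / even weights: orthogonality of `{1_v, v, v² − c 1_v}`
    (hsym1 : (∑ j, 1 * v j * w j) = 0)
    (hsym2 : (∑ j, v j * (v j)^2 * w j) = 0)
    (c : ℝ) (hc : c = (∑ j, 1 * (v j)^2 * w j) / (∑ j, 1 * 1 * w j))
    -- nondegeneracy (linear independence of the basis)
    (hnv : (∑ j, v j * v j * w j) ≠ 0)
    (hn2 : (∑ j, ((v j)^2 - c) * ((v j)^2 - c) * w j) ≠ 0)
    (f₁ : ℝ × ℝ × ℝ → Fin Nv → ℝ)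
    (hf₁ : ∀ ρ J κ j, f₁ (ρ, J, κ) j =
      (ρ / (∑ i, 1 * 1 * w i)) * (w j * 1)
      + (J / (∑ i, v i * v i * w i)) * (w j * v j)
      + ((2 * κ - c * ρ) / (∑ i, ((v i)^2 - c) * ((v i)^2 - c) * w i))
          * (w j * ((v j)^2 - c)))
    -- the moment map
    (M : (Fin Nv → ℝ) → ℝ × ℝ × ℝ)
    (hM : ∀ g, M g = (∑ j, g j * 1, ∑ j, g j * v j, (1/2) * ∑ j, g j * (v j)^2)) :
    (∀ ρ J κ : ℝ, M (f₁ (ρ, J, κ)) = (ρ, J, κ)) ∧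
    (∀ g : Fin Nv → ℝ, (∃ a b e : ℝ, ∀ j, g j = a + b * v j + e * (v j)^2) →
      f₁ (M (fun j => w j * g j)) = fun j => w j * g j) := by
  have hNv : 0 < Nv := by
    rcases Nat.eq_zero_or_pos Nv with h | h
    · subst h; simp at hnv
    · exact h
  have hA : (∑ j, 1 * 1 * w j) ≠ 0 := by
    have : 0 < ∑ j, 1 * 1 * w j :=
      Finset.sum_pos (fun j _ => by simpa using hpos j) ⟨⟨0, hNv⟩, Finset.mem_univ _⟩
    linarith
  have master : ∀ (p q r : ℝ) (F f1 f2 f3 : Fin Nv → ℝ),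
      (∀ j, F j = p * f1 j + q * f2 j + r * f3 j) →
      ∑ j, F j = p * ∑ j, f1 j + q * ∑ j, f2 j + r * ∑ j, f3 j := by
    intro p q r F f1 f2 f3 h
    rw [Finset.mul_sum, Finset.mul_sum, Finset.mul_sum, ← Finset.sum_add_distrib,
      ← Finset.sum_add_distrib]
    exact Finset.sum_congr rfl fun j _ => h j
  have hC2 : (∑ j, 1 * (v j)^2 * w j) = c * (∑ j, 1 * 1 * w j) := by
    rw [hc, div_mul_cancel₀ _ hA]
  -- S2 = E4 - c^2 * A
  have hS2e : (∑ j, ((v j)^2 - c) * ((v j)^2 - c) * w j)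
      = (∑ j, (v j)^2 * (v j)^2 * w j) - c ^ 2 * (∑ j, 1 * 1 * w j) := by
    have h := master 1 (-(2*c)) (c^2)
      (fun j => ((v j)^2 - c) * ((v j)^2 - c) * w j)
      (fun j => (v j)^2 * (v j)^2 * w j)
      (fun j => 1 * (v j)^2 * w j)
      (fun j => 1 * 1 * w j) (fun j => by ring)
    rw [h, hC2]; ring
  have hn2' : (∑ j, (v j)^2 * (v j)^2 * w j) - c ^ 2 * (∑ j, 1 * 1 * w j) ≠ 0 :=
    hS2e ▸ hn2
  -- sum of w * (v² - c) is zero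
  have hwc : (∑ j, w j * ((v j)^2 - c)) = 0 := by
    have h := master 1 (-c) 0
      (fun j => w j * ((v j)^2 - c))
      (fun j => 1 * (v j)^2 * w j)
      (fun j => 1 * 1 * w j)
      (fun _ => (0:ℝ)) (fun j => by ring)
    rw [h, hC2]; ring
  -- sum of w * (v² - c) * v is zero
  have hwcv : (∑ j, w j * ((v j)^2 - c) * v j) = 0 := by
    have h := master 1 (-c) 0
      (fun j => w j * ((v j)^2 - c) * v j)
      (fun j => v j * (v j)^2 * w j)
      (fun j => 1 * v j * w j)
      (fun _ => (0:ℝ)) (fun j => by ring)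
    rw [h, hsym1, hsym2]; ring
  -- sum of w * (v² - c) * v² equals S2
  have hwcv2 : (∑ j, w j * ((v j)^2 - c) * (v j)^2)
      = (∑ j, ((v j)^2 - c) * ((v j)^2 - c) * w j) := by
    have h := master 1 c (-(c^2))
      (fun j => w j * ((v j)^2 - c) * (v j)^2)
      (fun j => ((v j)^2 - c) * ((v j)^2 - c) * w j)
      (fun j => 1 * (v j)^2 * w j)
      (fun j => 1 * 1 * w j) (fun j => by ring)
    rw [h, hC2]; ring
  constructor
  · intro ρ J κ
    rw [hM, Prod.mk.injEq, Prod.mk.injEq]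
    refine ⟨?_, ?_, ?_⟩
    · have h := master (ρ / (∑ i, 1 * 1 * w i)) (J / (∑ i, v i * v i * w i))
        ((2 * κ - c * ρ) / (∑ i, ((v i)^2 - c) * ((v i)^2 - c) * w i))
        (fun j => f₁ (ρ, J, κ) j * 1)
        (fun j => 1 * 1 * w j)
        (fun j => 1 * v j * w j)
        (fun j => w j * ((v j)^2 - c))
        (fun j => by simp only [hf₁]; ring)
      rw [h, hsym1, hwc, div_mul_cancel₀ _ hA]; ring
    · have h := master (ρ / (∑ i, 1 * 1 * w i)) (J / (∑ i, v i * v i * w i))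
        ((2 * κ - c * ρ) / (∑ i, ((v i)^2 - c) * ((v i)^2 - c) * w i))
        (fun j => f₁ (ρ, J, κ) j * v j)
        (fun j => 1 * v j * w j)
        (fun j => v j * v j * w j)
        (fun j => w j * ((v j)^2 - c) * v j)
        (fun j => by simp only [hf₁]; ring)
      rw [h, hsym1, hwcv, div_mul_cancel₀ _ hnv]; ring
    · have h := master (ρ / (∑ i, 1 * 1 * w i)) (J / (∑ i, v i * v i * w i))
        ((2 * κ - c * ρ) / (∑ i, ((v i)^2 - c) * ((v i)^2 - c) * w i))
        (fun j => f₁ (ρ, J, κ) j * (v j)^2)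
        (fun j => 1 * (v j)^2 * w j)
        (fun j => v j * (v j)^2 * w j)
        (fun j => w j * ((v j)^2 - c) * (v j)^2)
        (fun j => by simp only [hf₁]; ring)
      rw [h, hsym2, hwcv2, hC2, mul_zero, div_mul_cancel₀ _ hn2,
        mul_comm c (∑ j, 1 * 1 * w j), ← mul_assoc, div_mul_cancel₀ _ hA]
      ring
  · rintro g ⟨a, b, e, hg⟩
    have hm1 : (∑ j, (fun j => w j * g j) j * 1) = (a + e * c) * (∑ j, 1 * 1 * w j) := by
      have h := master a b e
        (fun j => (fun j => w j * g j) j * 1)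
        (fun j => 1 * 1 * w j)
        (fun j => 1 * v j * w j)
        (fun j => 1 * (v j)^2 * w j)
        (fun j => by simp only [hg]; ring)
      rw [h, hsym1, hC2]; ring
    have hm2 : (∑ j, (fun j => w j * g j) j * v j) = b * (∑ j, v j * v j * w j) := by
      have h := master a b e
        (fun j => (fun j => w j * g j) j * v j)
        (fun j => 1 * v j * w j)
        (fun j => v j * v j * w j)
        (fun j => v j * (v j)^2 * w j)
        (fun j => by simp only [hg]; ring)
      rw [h, hsym1, hsym2]; ring
    have hm3 : ((1:ℝ)/2) * (∑ j, (fun j => w j * g j) j * (v j)^2)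
        = (1/2) * (a * (c * (∑ j, 1 * 1 * w j)) + e * (∑ j, (v j)^2 * (v j)^2 * w j)) := by
      have h := master a b e
        (fun j => (fun j => w j * g j) j * (v j)^2)
        (fun j => 1 * (v j)^2 * w j)
        (fun j => v j * (v j)^2 * w j)
        (fun j => (v j)^2 * (v j)^2 * w j)
        (fun j => by simp only [hg]; ring)
      rw [h, hsym2, hC2]; ring
    rw [hM, hm1, hm2, hm3]
    funext j
    simp only [hf₁]
    rw [hg j, mul_div_cancel_right₀ _ hA, mul_div_cancel_right₀ _ hnv,
      show 2 * (1/2 * (a * (c * (∑ j, 1 * 1 * w j)) + e * (∑ j, (v j)^2 * (v j)^2 * w j)))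
          - c * ((a + e * c) * (∑ j, 1 * 1 * w j))
          = e * (∑ j, ((v j)^2 - c) * ((v j)^2 - c) * w j) from by rw [hS2e]; ring,
      mul_div_cancel_right₀ _ hn2]
    ring
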